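/- If the cost values C : Fin n → ℝ together with strictly increasing breakpoints P : Fin n → ℝ define a convex piecewise-linear function f (given by f(Pᵢ) = Cᵢ and linear interpolation between consecutive breakpoints), then for every x ∈ [P 0, P (n-1)], the minimum of Σ γᵢ Cᵢ over all nonnegative γ with Σ γᵢ = 1 and Σ γᵢ Pᵢ = x (without the adjacency restriction) equals f(x). -/
import Mathlib

lemma two_point_sum {n : ℕ} (i i' : Fin n) (a b : ℝ) (g : Fin n → ℝ) :
    ∑ j, ((if j = i then a else 0) + (if j = i' then b else 0)) * g j
      = a * g i + b * g i' := by
  simp [add_mul, Finset.sum_add_distrib, ite_mul, Finset.sum_ite_eq']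

/-- For a convex piecewise-linear function defined by breakpoints `P` and values `C`,
the minimum of `∑ γᵢ Cᵢ` over nonnegative weights summing to `1` with `∑ γᵢ Pᵢ = x`
equals `f x`. -/
theorem sos2_relaxation_exact_of_convex (n : ℕ) (hn : 0 < n)
    (P C : Fin n → ℝ) (hP : StrictMono P) (f : ℝ → ℝ)
    (hfP : ∀ i, f (P i) = C i)
    (hinterp : ∀ (i : Fin n) (hi : (i : ℕ) + 1 < n), ∀ t ∈ Set.Icc (0 : ℝ) 1,
      f ((1 - t) * P i + t * P ⟨(i : ℕ) + 1, hi⟩)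
        = (1 - t) * C i + t * C ⟨(i : ℕ) + 1, hi⟩)
    (hconv : ConvexOn ℝ (Set.Icc (P ⟨0, hn⟩) (P ⟨n - 1, Nat.sub_lt hn one_pos⟩)) f)
    (x : ℝ) (hx : x ∈ Set.Icc (P ⟨0, hn⟩) (P ⟨n - 1, Nat.sub_lt hn one_pos⟩)) :
    IsLeast {v : ℝ | ∃ γ : Fin n → ℝ, (∀ i, 0 ≤ γ i) ∧ (∑ i, γ i = 1) ∧
      (∑ i, γ i * P i = x) ∧ v = ∑ i, γ i * C i} (f x) := by
  constructor
  · -- membership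
    set T : Finset (Fin n) := Finset.univ.filter (fun i => P i ≤ x) with hT
    have hTne : T.Nonempty := ⟨⟨0, hn⟩, by simp [hT, hx.1]⟩
    set i : Fin n := T.max' hTne with hi_def
    have hPi : P i ≤ x := by
      have := T.max'_mem hTne
      simpa [hT] using this
    by_cases hlt : (i : ℕ) + 1 < n
    · set i' : Fin n := ⟨(i : ℕ) + 1, hlt⟩ with hi'
      have hii' : i < i' := by simp [hi', Fin.lt_def]
      have hne : i ≠ i' := ne_of_lt hii'
      have hxlt : x < P i' := by
        by_contra h
        push_neg at h
        have : i' ∈ T := by simp [hT, h]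
        exact absurd (T.le_max' i' this) (not_le.mpr hii')
      have hden : 0 < P i' - P i := sub_pos.mpr (hP hii')
      set t : ℝ := (x - P i) / (P i' - P i) with ht_def
      have ht0 : 0 ≤ t := div_nonneg (by linarith) hden.le
      have ht1 : t ≤ 1 := by
        rw [ht_def, div_le_one hden]; linarith
      have hmul : t * (P i' - P i) = x - P i := by
        rw [ht_def]; field_simp
      have hx_eq : (1 - t) * P i + t * P i' = x := by linear_combination hmul
      refine ⟨fun j => (if j = i then (1 - t) else 0) + (if j = i' then t else 0),
        ?_, ?_, ?_, ?_⟩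
      · intro j
        dsimp only
        split_ifs <;> simp_all
      · have := two_point_sum i i' (1 - t) t (fun _ => 1)
        simpa using this
      · have := two_point_sum i i' (1 - t) t P
        rw [this, hx_eq]
      · have := two_point_sum i i' (1 - t) t C
        rw [this]
        have h2 := hinterp i hlt t ⟨ht0, ht1⟩
        rw [show (⟨(i : ℕ) + 1, hlt⟩ : Fin n) = i' from rfl] at h2
        rw [hx_eq] at h2
        exact h2
    · -- i is the last index, x = P i
      have hival : (i : ℕ) = n - 1 := by omega
      have hi_eq : i = ⟨n - 1, Nat.sub_lt hn one_pos⟩ := Fin.ext hival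
      have hxPi : x = P i := le_antisymm (hi_eq ▸ hx.2) hPi
      refine ⟨fun j => if j = i then 1 else 0, ?_, ?_, ?_, ?_⟩
      · intro j; dsimp only; split_ifs <;> norm_num
      · simp [Finset.sum_ite_eq']
      · simp [Finset.sum_ite_eq', ite_mul, hxPi]
      · simp [Finset.sum_ite_eq', ite_mul, hxPi, hfP]
  · -- lower bound
    rintro v ⟨γ, hγ0, hγ1, hγx, rfl⟩
    have hmem : ∀ j ∈ Finset.univ, P j ∈ Set.Icc (P ⟨0, hn⟩) (P ⟨n - 1, Nat.sub_lt hn one_pos⟩) := by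
      intro j _
      constructor
      · exact hP.monotone (by simp [Fin.le_def])
      · exact hP.monotone (by simp [Fin.le_def]; omega)
    have := hconv.map_sum_le (fun j _ => hγ0 j) hγ1 hmem
    simp only [smul_eq_mul] at this
    rw [hγx] at this
    calc f x ≤ ∑ j, γ j * f (P j) := this
      _ = ∑ j, γ j * C j := by simp [hfP]
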